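/- With S(m,n,p,d) = (2mp(n-1)(2-p) + p^2(n-1)\sum_i d_i^2 - 4m^2p^2)^{1/2}, the variance of the uniform nontrivial eigenvalue \ell of the Laplacian of \hat{G} \in G(G,p) satisfies \sigma^2 = S(m,n,p,d)^2/(n-1)^2. -/

import Mathlib

open MeasureTheory ProbabilityTheory Finset SimpleGraph
attribute [local instance] Classical.propDecidable

/-- The eigenvalues of a real symmetric matrix, sorted in increasing order. -/
noncomputable def sortedEigs {n : ℕ} (A : Matrix (Fin n) (Fin n) ℝ) : List ℝ :=
  if hA : A.IsHermitian then
    Multiset.sort (Multiset.ofList (List.ofFn hA.eigenvalues)) (· ≤ ·)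
  else []

/-- `eig A i` is the `i`-th smallest eigenvalue `λ_i(A)` (1-indexed). -/
noncomputable def eig {n : ℕ} (A : Matrix (Fin n) (Fin n) ℝ) (i : ℕ) : ℝ :=
  (sortedEigs A).getD (i - 1) 0

/-- `S(m,n,p,d) = (2mp(n-1)(2-p) + p²(n-1)∑ᵢdᵢ² - 4m²p²)^{1/2}`. -/
noncomputable def S (m n : ℕ) (p : ℝ) (d : Fin n → ℕ) : ℝ :=
  Real.sqrt (2 * m * p * ((n : ℝ) - 1) * (2 - p)
    + p ^ 2 * ((n : ℝ) - 1) * ∑ i, (d i : ℝ) ^ 2 - 4 * (m : ℝ) ^ 2 * p ^ 2)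

/-!
Because `λ₁ = 0`, the sums over the nontrivial eigenvalues of `L = L(Ĝ)` are `tr L = ∑ d̂ᵥ` and
`tr L² = ∑ d̂ᵥ² + ∑ d̂ᵥ`, where `d̂ᵥ` is the degree of `v` in `Ĝ`. Each `d̂ᵥ` is a sum of `dᵥ`
pairwise independent Bernoulli(`p`) indicators, so `E d̂ᵥ = p dᵥ` and
`E d̂ᵥ² = p² dᵥ² + p (1 - p) dᵥ`; with `∑ dᵥ = 2m` this gives `(n - 1)²` times the left-hand side
as the radicand of `S`. That radicand is nonnegative because the left-hand side is the variance of
`ℓ`.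
-/

theorem List.sum_map_eq_sum_range_getD (l : List ℝ) (f : ℝ → ℝ) :
    (l.map f).sum = ∑ i ∈ Finset.range l.length, f (l.getD i 0) := by
  induction l with
  | nil => simp
  | cons a t ih =>
    rw [List.length_cons, Finset.sum_range_succ', List.map_cons, List.sum_cons, ih, add_comm]
    rfl

theorem sortedEigs_pairwise_le {n : ℕ} (A : Matrix (Fin n) (Fin n) ℝ) :
    (sortedEigs A).Pairwise (· ≤ ·) := by
  unfold sortedEigs
  split_ifs
  · exact Multiset.pairwise_sort _ _
  · exact List.Pairwise.nil

namespace Matrix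

variable {n : ℕ} {A : Matrix (Fin n) (Fin n) ℝ}

namespace IsHermitian

theorem trace_pow_eq_sum_eigenvalues_pow (hA : A.IsHermitian) (k : ℕ) :
    (A ^ k).trace = ∑ i, hA.eigenvalues i ^ k := by
  conv_lhs => rw [hA.spectral_theorem, ← map_pow, diagonal_pow, Unitary.conjStarAlgAut_apply,
    trace_mul_cycle, Unitary.coe_star_mul_self, one_mul, trace_diagonal]
  simp

theorem sortedEigs_perm (hA : A.IsHermitian) :
    (sortedEigs A).Perm (List.ofFn hA.eigenvalues) := by
  rw [sortedEigs, dif_pos hA]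
  exact Multiset.coe_eq_coe.mp (Multiset.sort_eq _ _)

theorem mem_sortedEigs (hA : A.IsHermitian) {x : ℝ} :
    x ∈ sortedEigs A ↔ ∃ i, hA.eigenvalues i = x := by
  rw [hA.sortedEigs_perm.mem_iff, List.mem_ofFn]

theorem sum_Icc_eig (hA : A.IsHermitian) (f : ℝ → ℝ) :
    ∑ i ∈ Icc 1 n, f (eig A i) = ∑ i, f (hA.eigenvalues i) := by
  have hlen : (sortedEigs A).length = n := by simpa using hA.sortedEigs_perm.length_eq
  calc ∑ i ∈ Icc 1 n, f (eig A i)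
      = ∑ i ∈ range (sortedEigs A).length, f ((sortedEigs A).getD i 0) := by
        rw [← Ico_add_one_right_eq_Icc, sum_Ico_eq_sum_range, add_tsub_cancel_right, hlen]
        simp [eig]
    _ = ((sortedEigs A).map f).sum := (List.sum_map_eq_sum_range_getD _ f).symm
    _ = ((List.ofFn hA.eigenvalues).map f).sum := (hA.sortedEigs_perm.map f).sum_eq
    _ = ∑ i, f (hA.eigenvalues i) := by rw [List.map_ofFn, List.sum_ofFn]; rfl

end IsHermitian

namespace PosSemidef

theorem eig_one_eq_zero (hA : A.PosSemidef) (hdet : A.det = 0) : eig A 1 = 0 := by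
  obtain ⟨i, hi⟩ : ∃ i, hA.1.eigenvalues i = 0 := by
    simpa [hA.1.det_eq_prod_eigenvalues, prod_eq_zero_iff] using hdet
  have hzero : (0 : ℝ) ∈ sortedEigs A := hA.1.mem_sortedEigs.mpr ⟨i, hi⟩
  have hsorted := sortedEigs_pairwise_le A
  unfold eig
  rcases hl : sortedEigs A with _ | ⟨a, t⟩
  · rfl
  · rw [hl] at hzero hsorted
    have ha_nonneg : 0 ≤ a := by
      obtain ⟨j, hj⟩ := hA.1.mem_sortedEigs.mp (hl ▸ List.mem_cons_self)
      exact hj ▸ hA.eigenvalues_nonneg j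
    rcases List.mem_cons.mp hzero with h | h
    · exact h.symm
    · exact le_antisymm ((List.pairwise_cons.mp hsorted).1 0 h) ha_nonneg

theorem sum_Icc_two_eig (hA : A.PosSemidef) (hdet : A.det = 0) (hn : 1 ≤ n) (f : ℝ → ℝ)
    (hf : f 0 = 0) : ∑ i ∈ Icc 2 n, f (eig A i) = ∑ i, f (hA.1.eigenvalues i) := by
  rw [← hA.1.sum_Icc_eig f, ← insert_Icc_add_one_left_eq_Icc hn, sum_insert (by simp),
    hA.eig_one_eq_zero hdet, hf, zero_add]
  rfl

end PosSemidef

end Matrix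

namespace SimpleGraph

open Matrix

section Laplacian

variable {V : Type*} [Fintype V] [DecidableEq V] (K : SimpleGraph V) [DecidableRel K.Adj]

theorem trace_lapMatrix : (K.lapMatrix ℝ).trace = ∑ v, (K.degree v : ℝ) := by
  simp [lapMatrix, degMatrix, trace_adjMatrix]

theorem trace_lapMatrix_sq :
    ((K.lapMatrix ℝ) ^ 2).trace = ∑ v, (K.degree v : ℝ) ^ 2 + ∑ v, (K.degree v : ℝ) := by
  have hDA : (K.degMatrix ℝ * K.adjMatrix ℝ).trace = 0 := by
    simp only [degMatrix, trace, diag_apply, diagonal_mul, adjMatrix_apply, K.irrefl, if_false,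
      mul_zero, sum_const_zero]
  rw [lapMatrix, sq, sub_mul, mul_sub, mul_sub, trace_sub, trace_sub, trace_sub,
    trace_mul_comm (K.adjMatrix ℝ), hDA]
  simp only [trace, diag_apply, adjMatrix_mul_self_apply_self, degMatrix, diagonal_mul_diagonal,
    diagonal_apply_eq, sq]
  ring

end Laplacian

theorem degree_eq_sum_ite_adj_of_le {V : Type*} [Fintype V] [DecidableEq V]
    {G K : SimpleGraph V} [DecidableRel G.Adj] [DecidableRel K.Adj] (hKG : K ≤ G) (v : V) :
    (K.degree v : ℝ) = ∑ w ∈ G.neighborFinset v, if K.Adj v w then 1 else 0 := by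
  rw [degree_eq_sum_if_adj]
  refine (sum_subset (subset_univ _) fun w _ hw => if_neg fun h => hw ?_).symm
  exact (G.mem_neighborFinset v w).2 (hKG h)

variable {n : ℕ} (K : SimpleGraph (Fin n)) [DecidableRel K.Adj]

theorem sum_Icc_two_eig_lapMatrix (hn : 1 ≤ n) :
    ∑ i ∈ Icc 2 n, eig (K.lapMatrix ℝ) i = ∑ v, (K.degree v : ℝ) := by
  have : Nonempty (Fin n) := ⟨⟨0, hn⟩⟩
  have hL := posSemidef_lapMatrix ℝ K
  rw [← trace_lapMatrix, hL.1.trace_eq_sum_eigenvalues]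
  exact hL.sum_Icc_two_eig (det_lapMatrix_eq_zero K) hn id rfl

theorem sum_Icc_two_eig_lapMatrix_sq (hn : 1 ≤ n) :
    ∑ i ∈ Icc 2 n, eig (K.lapMatrix ℝ) i ^ 2
      = ∑ v, (K.degree v : ℝ) ^ 2 + ∑ v, (K.degree v : ℝ) := by
  have : Nonempty (Fin n) := ⟨⟨0, hn⟩⟩
  have hL := posSemidef_lapMatrix ℝ K
  rw [hL.sum_Icc_two_eig (det_lapMatrix_eq_zero K) hn (· ^ 2) (zero_pow two_ne_zero),
    ← trace_lapMatrix_sq, hL.1.trace_pow_eq_sum_eigenvalues_pow]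

end SimpleGraph

section IndicatorSum

variable {Ω ι : Type*} [MeasurableSpace Ω] {μ : Measure Ω} [IsProbabilityMeasure μ]
  {A : ι → Set Ω} {s : Finset ι} {p : ℝ}

theorem integral_sum_indicator_one (hA : ∀ i ∈ s, MeasurableSet (A i))
    (hp : ∀ i ∈ s, μ.real (A i) = p) :
    ∫ ω, ∑ i ∈ s, (A i).indicator 1 ω ∂μ = #s * p := by
  rw [integral_finsetSum _ fun i hi => (integrable_const 1).indicator (hA i hi),
    sum_congr rfl fun i hi => (integral_indicator_one (hA i hi)).trans (hp i hi), sum_const,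
    nsmul_eq_mul]

theorem integral_sum_indicator_one_sq (hA : ∀ i ∈ s, MeasurableSet (A i))
    (hp : ∀ i ∈ s, μ.real (A i) = p)
    (hind : ∀ i ∈ s, ∀ j ∈ s, i ≠ j → IndepSet (A i) (A j) μ) :
    ∫ ω, (∑ i ∈ s, (A i).indicator 1 ω) ^ 2 ∂μ = p ^ 2 * #s ^ 2 + p * (1 - p) * #s := by
  have hpair : ∀ i ∈ s, ∀ j ∈ s,
      μ.real (A i ∩ A j) = p ^ 2 + if i = j then p - p ^ 2 else 0 := by
    intro i hi j hj
    split_ifs with hij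
    · rw [hij, Set.inter_self, hp j hj]; ring
    · rw [measureReal_def, (hind i hi j hj hij).measure_inter_eq_mul, ENNReal.toReal_mul,
        ← measureReal_def, ← measureReal_def, hp i hi, hp j hj, sq, add_zero]
  calc ∫ ω, (∑ i ∈ s, (A i).indicator 1 ω) ^ 2 ∂μ
      = ∫ ω, ∑ i ∈ s, ∑ j ∈ s, (A i ∩ A j).indicator 1 ω ∂μ := by
        simp only [sq, sum_mul_sum, Set.inter_indicator_one, Pi.mul_apply]
    _ = ∑ i ∈ s, ∑ j ∈ s, μ.real (A i ∩ A j) := by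
        have hmeas : ∀ i ∈ s, ∀ j ∈ s, MeasurableSet (A i ∩ A j) :=
          fun i hi j hj => (hA i hi).inter (hA j hj)
        rw [integral_finsetSum _ fun i hi => integrable_finsetSum _ fun j hj =>
          (integrable_const 1).indicator (hmeas i hi j hj)]
        refine sum_congr rfl fun i hi => ?_
        rw [integral_finsetSum _ fun j hj => (integrable_const 1).indicator (hmeas i hi j hj)]
        exact sum_congr rfl fun j hj => integral_indicator_one (hmeas i hi j hj)
    _ = ∑ i ∈ s, ∑ j ∈ s, (p ^ 2 + if i = j then p - p ^ 2 else 0) :=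
        sum_congr rfl fun i hi => sum_congr rfl fun j hj => hpair i hi j hj
    _ = p ^ 2 * #s ^ 2 + p * (1 - p) * #s := by
        simp only [sum_add_distrib, sum_const, sum_ite_eq, nsmul_eq_mul]
        rw [sum_congr rfl fun i hi => if_pos hi]
        simp only [sum_const, nsmul_eq_mul]
        ring

end IndicatorSum

theorem sq_integral_mean_le_integral_mean_sq {Ω ι : Type*} [MeasurableSpace Ω] {μ : Measure Ω}
    [IsProbabilityMeasure μ] (s : Finset ι) (f : Ω → ι → ℝ)
    (hf : ∀ i ∈ s, MemLp (fun ω => f ω i) 2 μ) :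
    (∫ ω, (#s : ℝ)⁻¹ * ∑ i ∈ s, f ω i ∂μ) ^ 2
      ≤ ∫ ω, (#s : ℝ)⁻¹ * ∑ i ∈ s, f ω i ^ 2 ∂μ := by
  set X : Ω → ℝ := fun ω => (#s : ℝ)⁻¹ * ∑ i ∈ s, f ω i
  have hX : MemLp X 2 μ := (memLp_finsetSum s hf).const_mul _
  have hpointwise : ∀ ω, X ω ^ 2 ≤ (#s : ℝ)⁻¹ * ∑ i ∈ s, f ω i ^ 2 := fun ω =>
    calc X ω ^ 2 = (#s : ℝ)⁻¹ ^ 2 * (∑ i ∈ s, f ω i) ^ 2 := mul_pow _ _ _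
      _ ≤ (#s : ℝ)⁻¹ ^ 2 * (#s * ∑ i ∈ s, f ω i ^ 2) :=
        mul_le_mul_of_nonneg_left (sq_sum_le_card_mul_sum_sq ..) (sq_nonneg _)
      _ = (#s : ℝ)⁻¹ * ∑ i ∈ s, f ω i ^ 2 := by
        rcases eq_or_ne (#s : ℝ) 0 with h | h
        · simp [h]
        · field_simp
  calc (∫ ω, X ω ∂μ) ^ 2 ≤ ∫ ω, X ω ^ 2 ∂μ := by
        simpa [variance_eq_sub hX] using variance_nonneg X μ
    _ ≤ _ := integral_mono hX.integrable_sq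
        ((integrable_finsetSum _ fun i hi => (hf i hi).integrable_sq).const_mul _) hpointwise

theorem degree_eq_sum_indicator_of_le {Ω V : Type*} [Fintype V] [DecidableEq V]
    {G : SimpleGraph V} [DecidableRel G.Adj] {H : Ω → SimpleGraph V} [∀ ω, DecidableRel (H ω).Adj]
    (hsub : ∀ ω, H ω ≤ G) (v : V) (ω : Ω) :
    ((H ω).degree v : ℝ)
      = ∑ w ∈ G.neighborFinset v, {ω | s(v, w) ∈ (H ω).edgeSet}.indicator 1 ω := by
  rw [degree_eq_sum_ite_adj_of_le (hsub ω)]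
  exact sum_congr rfl fun w _ => by simp [Set.indicator_apply]

theorem indepSet_adj_of_ne {Ω V : Type*} [MeasurableSpace Ω] {μ : Measure Ω}
    {G : SimpleGraph V} {H : Ω → SimpleGraph V}
    (hind : iIndepSet (fun e : G.edgeSet => {ω | (e : Sym2 V) ∈ (H ω).edgeSet}) μ) {v w w' : V}
    (hw : G.Adj v w) (hw' : G.Adj v w') (hne : w ≠ w') :
    IndepSet {ω | s(v, w) ∈ (H ω).edgeSet} {ω | s(v, w') ∈ (H ω).edgeSet} μ :=
  hind.indep (i := ⟨s(v, w), hw⟩) (j := ⟨s(v, w'), hw'⟩)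
    fun h => hne (Sym2.congr_right.1 (congrArg Subtype.val h))

section RandomSubgraph

variable {Ω : Type*} [MeasurableSpace Ω] [DiscreteMeasurableSpace Ω] {μ : Measure Ω}
  [IsProbabilityMeasure μ] {V : Type*} [Fintype V] [DecidableEq V] {G : SimpleGraph V}
  [DecidableRel G.Adj] {H : Ω → SimpleGraph V} [∀ ω, DecidableRel (H ω).Adj] {p : ℝ}

theorem integral_degree (hsub : ∀ ω, H ω ≤ G)
    (hedge : ∀ e ∈ G.edgeSet, μ.real {ω | e ∈ (H ω).edgeSet} = p) (v : V) :
    ∫ ω, ((H ω).degree v : ℝ) ∂μ = p * G.degree v := by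
  simp_rw [degree_eq_sum_indicator_of_le hsub v]
  rw [integral_sum_indicator_one (fun _ _ => .of_discrete)
    (fun w hw => hedge _ ((G.mem_neighborFinset v w).1 hw)), card_neighborFinset_eq_degree,
    mul_comm]

theorem integral_degree_sq (hsub : ∀ ω, H ω ≤ G)
    (hedge : ∀ e ∈ G.edgeSet, μ.real {ω | e ∈ (H ω).edgeSet} = p)
    (hind : iIndepSet (fun e : G.edgeSet => {ω | (e : Sym2 V) ∈ (H ω).edgeSet}) μ) (v : V) :
    ∫ ω, ((H ω).degree v : ℝ) ^ 2 ∂μ = p ^ 2 * G.degree v ^ 2 + p * (1 - p) * G.degree v := by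
  simp_rw [degree_eq_sum_indicator_of_le hsub v]
  rw [integral_sum_indicator_one_sq (fun _ _ => .of_discrete)
    (fun w hw => hedge _ ((G.mem_neighborFinset v w).1 hw))
    (fun w hw w' hw' hne => indepSet_adj_of_ne hind ((G.mem_neighborFinset v w).1 hw)
      ((G.mem_neighborFinset v w').1 hw') hne), card_neighborFinset_eq_degree]

theorem integral_sum_degree [Finite Ω] (hsub : ∀ ω, H ω ≤ G)
    (hedge : ∀ e ∈ G.edgeSet, μ.real {ω | e ∈ (H ω).edgeSet} = p) :
    ∫ ω, ∑ v, ((H ω).degree v : ℝ) ∂μ = p * ∑ v, (G.degree v : ℝ) := by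
  rw [integral_finsetSum _ fun _ _ => .of_finite, mul_sum]
  exact sum_congr rfl fun v _ => integral_degree hsub hedge v

theorem integral_sum_degree_sq [Finite Ω] (hsub : ∀ ω, H ω ≤ G)
    (hedge : ∀ e ∈ G.edgeSet, μ.real {ω | e ∈ (H ω).edgeSet} = p)
    (hind : iIndepSet (fun e : G.edgeSet => {ω | (e : Sym2 V) ∈ (H ω).edgeSet}) μ) :
    ∫ ω, ∑ v, ((H ω).degree v : ℝ) ^ 2 ∂μ
      = p ^ 2 * ∑ v, (G.degree v : ℝ) ^ 2 + p * (1 - p) * ∑ v, (G.degree v : ℝ) := by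
  rw [integral_finsetSum _ fun _ _ => .of_finite, mul_sum, mul_sum, ← sum_add_distrib]
  exact sum_congr rfl fun v _ => integral_degree_sq hsub hedge hind v

end RandomSubgraph

theorem variance_eq_S_sq_general {Ω : Type*} [Fintype Ω] [MeasurableSpace Ω]
    [MeasurableSingletonClass Ω] (μ : Measure Ω) [IsProbabilityMeasure μ]
    {n : ℕ} (hn : 2 ≤ n) (G : SimpleGraph (Fin n))
    (p : ℝ)
    (H : Ω → SimpleGraph (Fin n)) (hsub : ∀ ω, H ω ≤ G)
    (hedge : ∀ e ∈ G.edgeSet, (μ {ω | e ∈ (H ω).edgeSet}).toReal = p)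
    (hind : iIndepSet (fun e : G.edgeSet => {ω | (e : Sym2 (Fin n)) ∈ (H ω).edgeSet}) μ) :
    (∫ ω, (((n : ℝ) - 1)⁻¹ * ∑ i ∈ Finset.Icc 2 n, (eig ((H ω).lapMatrix ℝ) i) ^ 2) ∂μ)
      - (∫ ω, (((n : ℝ) - 1)⁻¹ * ∑ i ∈ Finset.Icc 2 n, eig ((H ω).lapMatrix ℝ) i) ∂μ) ^ 2
      = (S G.edgeFinset.card n p (fun i => G.degree i)) ^ 2 / ((n : ℝ) - 1) ^ 2 := by
  have hn1 : 1 ≤ n := by omega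
  have hcard : (#(Icc 2 n) : ℝ) = (n : ℝ) - 1 := by
    rw [Nat.card_Icc, Nat.cast_sub (by omega)]; push_cast; ring
  have hdeg : ∑ v, (G.degree v : ℝ) = 2 * #G.edgeFinset := by
    exact_mod_cast G.sum_degrees_eq_twice_card_edges
  have hmean : ∫ ω, ((n : ℝ) - 1)⁻¹ * ∑ i ∈ Icc 2 n, eig ((H ω).lapMatrix ℝ) i ∂μ
      = ((n : ℝ) - 1)⁻¹ * (p * (2 * #G.edgeFinset)) := by
    simp_rw [sum_Icc_two_eig_lapMatrix _ hn1]
    rw [integral_const_mul, integral_sum_degree hsub hedge, hdeg]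
  have hmean_sq : ∫ ω, ((n : ℝ) - 1)⁻¹ * ∑ i ∈ Icc 2 n, eig ((H ω).lapMatrix ℝ) i ^ 2 ∂μ
      = ((n : ℝ) - 1)⁻¹
        * (p ^ 2 * ∑ v, (G.degree v : ℝ) ^ 2 + p * (1 - p) * (2 * #G.edgeFinset)
          + p * (2 * #G.edgeFinset)) := by
    simp_rw [sum_Icc_two_eig_lapMatrix_sq _ hn1]
    rw [integral_const_mul, integral_add .of_finite .of_finite,
      integral_sum_degree_sq hsub hedge hind, integral_sum_degree hsub hedge, hdeg]
  have hvar_nonneg := sub_nonneg.2 (hcard ▸ sq_integral_mean_le_integral_mean_sq (μ := μ) (Icc 2 n)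
    (fun ω i => eig ((H ω).lapMatrix ℝ) i) fun _ _ => .of_discrete)
  rw [hmean_sq, hmean] at hvar_nonneg ⊢
  have hn' : (n : ℝ) - 1 ≠ 0 := sub_ne_zero.2 (by exact_mod_cast (by omega : n ≠ 1))
  rw [S, Real.sq_sqrt]
  · field_simp
    ring
  · refine (mul_nonneg (sq_nonneg ((n : ℝ) - 1)) hvar_nonneg).trans_eq ?_
    field_simp
    ring

/-- The variance of the uniform nontrivial Laplacian eigenvalue `ℓ` of a random
subgraph of `G` equals `S(m,n,p,d)²/(n-1)²`. -/
theorem variance_eq_S_sq {Ω : Type*} [Fintype Ω] [MeasurableSpace Ω]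
    [MeasurableSingletonClass Ω] (μ : Measure Ω) [IsProbabilityMeasure μ]
    {n : ℕ} (hn : 2 ≤ n) (G : SimpleGraph (Fin n)) (hG : G.Connected)
    (p : ℝ) (hp0 : 0 < p) (hp1 : p < 1)
    (H : Ω → SimpleGraph (Fin n)) (hsub : ∀ ω, H ω ≤ G)
    (hedge : ∀ e ∈ G.edgeSet, (μ {ω | e ∈ (H ω).edgeSet}).toReal = p)
    (hind : iIndepSet (fun e : G.edgeSet => {ω | (e : Sym2 (Fin n)) ∈ (H ω).edgeSet}) μ) :
    (∫ ω, (((n : ℝ) - 1)⁻¹ * ∑ i ∈ Finset.Icc 2 n, (eig ((H ω).lapMatrix ℝ) i) ^ 2) ∂μ)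
      - (∫ ω, (((n : ℝ) - 1)⁻¹ * ∑ i ∈ Finset.Icc 2 n, eig ((H ω).lapMatrix ℝ) i) ∂μ) ^ 2
      = (S G.edgeFinset.card n p (fun i => G.degree i)) ^ 2 / ((n : ℝ) - 1) ^ 2 :=
  variance_eq_S_sq_general μ hn G p H hsub hedge hind
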